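/- arXiv:1707.03541 — 3 statements merged into one kernel-verified Lean document; each statement's English description precedes it below -/
import Mathlib

section
/- Let x₀, x₁ ∈ {0,1} and p₀, p₁, o₀ be real numbers with o₀ = p₀². Set u = x₀·x₁ and y = p₀·x₁. Then the 3×3 matrix with rows (x₁, u, y), (u, x₀, p₀), (y, p₀, o₀) is positive semidefinite, provided p₀ = p₀·x₀ (i.e., p₀ = 0 when x₀ = 0). -/
/-!
The matrix is a convex combination, with weights `x₁` and `1 - x₁`, of the rank-one matrices
`w wᵀ` and `z zᵀ` for `w = (1, x₀, p₀)` and `z = (0, x₀, p₀)`: the identities `x₀² = x₀` and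
`p₀ x₀ = p₀` make the entries of `w wᵀ` in the lower-right block agree with those of `z zᵀ`.
-/

open Matrix

lemma Matrix.posSemidef_smul_vecMulVec_add_one_sub_smul {n : Type*} [Fintype n] {t : ℝ}
    (ht₀ : 0 ≤ t) (ht₁ : t ≤ 1) (v w : n → ℝ) :
    (t • vecMulVec v v + (1 - t) • vecMulVec w w).PosSemidef := by
  have hv := posSemidef_vecMulVec_self_star v
  have hw := posSemidef_vecMulVec_self_star w
  rw [star_trivial] at hv hw
  exact (hv.smul ht₀).add (hw.smul (sub_nonneg.mpr ht₁))

lemma conic1_matrix_eq_smul_vecMulVec_add {x₀ p₀ : ℝ} (x₁ : ℝ) (hx₀ : x₀ * x₀ = x₀)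
    (hp₀ : p₀ = p₀ * x₀) :
    !![x₁, x₀ * x₁, p₀ * x₁; x₀ * x₁, x₀, p₀; p₀ * x₁, p₀, p₀ ^ 2] =
      x₁ • vecMulVec ![1, x₀, p₀] ![1, x₀, p₀] +
        (1 - x₁) • vecMulVec ![0, x₀, p₀] ![0, x₀, p₀] := by
  ext i j
  fin_cases i <;> fin_cases j <;> simp <;> grind

theorem tsdp_unit_conic1 (x₀ x₁ p₀ o₀ u y : ℝ)
    (hx₀ : x₀ = 0 ∨ x₀ = 1) (hx₁ : x₁ = 0 ∨ x₁ = 1)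
    (ho₀ : o₀ = p₀ ^ 2) (hp₀ : p₀ = p₀ * x₀)
    (hu : u = x₀ * x₁) (hy : y = p₀ * x₁) :
    (!![x₁, u, y; u, x₀, p₀; y, p₀, o₀] : Matrix (Fin 3) (Fin 3) ℝ).PosSemidef := by
  subst hu hy ho₀
  have hx₀_idem : x₀ * x₀ = x₀ := by rcases hx₀ with rfl | rfl <;> norm_num
  have hx₁_mem : 0 ≤ x₁ ∧ x₁ ≤ 1 := by rcases hx₁ with rfl | rfl <;> norm_num
  rw [conic1_matrix_eq_smul_vecMulVec_add x₁ hx₀_idem hp₀]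
  exact posSemidef_smul_vecMulVec_add_one_sub_smul hx₁_mem.1 hx₁_mem.2 _ _
end

section
/- Let x₀, x₁ ∈ {0,1} and p₁, o₁ be real numbers with o₁ = p₁² and p₁ = p₁·x₁. Set u = x₀·x₁ and z = x₀·p₁. Then the 3×3 matrix with rows (x₀, u, z), (u, x₁, p₁), (z, p₁, o₁) is positive semidefinite. -/
/-! Under the binary and capacity constraints the matrix is the rank-one Gram matrix `w wᵀ` of
`w = (x₀, x₁, p₁)`: the diagonal entries `x₀, x₁` equal `x₀², x₁²`, and `p₁ = x₁ p₁`. -/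

open Matrix

theorem mul_self_eq_of_eq_zero_or_eq_one {M₀ : Type*} [MulZeroOneClass M₀] {x : M₀}
    (hx : x = 0 ∨ x = 1) : x * x = x := by
  rcases hx with rfl | rfl <;> simp

theorem vecMulVec_cons_three {R : Type*} [Mul R] (a b c d e f : R) :
    vecMulVec ![a, b, c] ![d, e, f] =
      !![a * d, a * e, a * f; b * d, b * e, b * f; c * d, c * e, c * f] := by
  ext i j
  fin_cases i <;> fin_cases j <;> rfl

theorem tsdp_unit_conic2 (x₀ x₁ p₁ o₁ u z : ℝ)
    (hx₀ : x₀ = 0 ∨ x₀ = 1) (hx₁ : x₁ = 0 ∨ x₁ = 1)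
    (ho₁ : o₁ = p₁ ^ 2) (hp₁ : p₁ = p₁ * x₁)
    (hu : u = x₀ * x₁) (hz : z = x₀ * p₁) :
    (!![x₀, u, z; u, x₁, p₁; z, p₁, o₁] : Matrix (Fin 3) (Fin 3) ℝ).PosSemidef := by
  have hGram : vecMulVec ![x₀, x₁, p₁] (star ![x₀, x₁, p₁]) =
      !![x₀, u, z; u, x₁, p₁; z, p₁, o₁] := by
    rw [star_trivial, vecMulVec_cons_three, mul_self_eq_of_eq_zero_or_eq_one hx₀,
      mul_self_eq_of_eq_zero_or_eq_one hx₁, mul_comm x₁ x₀, mul_comm p₁ x₀, mul_comm x₁ p₁,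
      ← hp₁, ← sq, hu, hz, ho₁]
  exact hGram ▸ posSemidef_vecMulVec_self_star _
end

section
/- Algorithm correctness: let x^opt ∈ [0,1]^T be any fractional sequence, and let x^feas be constructed sequentially by: if a startup occurred within the last m↑ − 1 periods set x^feas_t = 1; else if a shutdown occurred within the last m↓ − 1 periods set x^feas_t = 0; otherwise set x^feas_t = round(x^opt_t + 0.25); assuming the algorithm never declares failure (i.e., simultaneous forced up and down never occurs). Then x^feas ∈ {0,1}^T satisfies the minimum-up constraints x_t ≥ x_τ − x_{τ−1} for all τ ∈ {t − m↑ + 1, …, t} and minimum-down constraints 1 − x_t ≥ x_{τ−1} − x_τ for all τ ∈ {t − m↓ + 1, …, t}. -/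
/-- Correctness of the rounding procedure (Algorithm 1): the recovered commitment
sequence is binary and satisfies the minimum-up and minimum-down time constraints. -/
theorem rounding_algorithm_correct
    (mup mdown : ℕ) (hmup : 1 ≤ mup) (hmdown : 1 ≤ mdown)
    (xopt xfeas : ℤ → ℝ)
    (hopt : ∀ t : ℤ, 0 ≤ xopt t ∧ xopt t ≤ 1)
    -- initial values (t ≤ 0) are fixed binary values
    (hinit : ∀ t : ℤ, t ≤ 0 → xfeas t = 0 ∨ xfeas t = 1)
    -- the algorithm's sequential construction for t ≥ 1
    (halg : ∀ t : ℤ, 1 ≤ t →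
      (¬ ((∃ τ : ℤ, t - mup + 1 ≤ τ ∧ τ ≤ t - 1 ∧ xfeas τ - xfeas (τ - 1) = 1) ∧
          (∃ τ : ℤ, t - mdown + 1 ≤ τ ∧ τ ≤ t - 1 ∧ xfeas (τ - 1) - xfeas τ = 1))) ∧
      ((∃ τ : ℤ, t - mup + 1 ≤ τ ∧ τ ≤ t - 1 ∧ xfeas τ - xfeas (τ - 1) = 1) →
        xfeas t = 1) ∧
      ((∃ τ : ℤ, t - mdown + 1 ≤ τ ∧ τ ≤ t - 1 ∧ xfeas (τ - 1) - xfeas τ = 1) →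
        xfeas t = 0) ∧
      ((¬ (∃ τ : ℤ, t - mup + 1 ≤ τ ∧ τ ≤ t - 1 ∧ xfeas τ - xfeas (τ - 1) = 1)) →
       (¬ (∃ τ : ℤ, t - mdown + 1 ≤ τ ∧ τ ≤ t - 1 ∧ xfeas (τ - 1) - xfeas τ = 1)) →
        xfeas t = (round (xopt t + 0.25) : ℤ))) :
    (∀ t : ℤ, xfeas t = 0 ∨ xfeas t = 1) ∧
      (∀ t : ℤ, 1 ≤ t → ∀ τ : ℤ, t - mup + 1 ≤ τ → τ ≤ t →
        xfeas t ≥ xfeas τ - xfeas (τ - 1)) ∧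
      (∀ t : ℤ, 1 ≤ t → ∀ τ : ℤ, t - mdown + 1 ≤ τ → τ ≤ t →
        1 - xfeas t ≥ xfeas (τ - 1) - xfeas τ) := by
  have hbin : ∀ t : ℤ, xfeas t = 0 ∨ xfeas t = 1 := by
    intro t
    rcases le_or_gt t 0 with h | h
    · exact hinit t h
    · obtain ⟨_, h1, h0, hr⟩ := halg t h
      by_cases hs : ∃ τ : ℤ, t - mup + 1 ≤ τ ∧ τ ≤ t - 1 ∧ xfeas τ - xfeas (τ - 1) = 1
      · exact Or.inr (h1 hs)
      by_cases hd : ∃ τ : ℤ, t - mdown + 1 ≤ τ ∧ τ ≤ t - 1 ∧ xfeas (τ - 1) - xfeas τ = 1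
      · exact Or.inl (h0 hd)
      · have heq := hr hs hd
        obtain ⟨ho0, ho1⟩ := hopt t
        have hrd : round (xopt t + 0.25) = 0 ∨ round (xopt t + 0.25) = 1 := by
          have hle : ⌊xopt t + 0.25 + 1/2⌋ < 2 := Int.floor_lt.mpr (by push_cast; linarith)
          have hge : (0:ℤ) ≤ ⌊xopt t + 0.25 + 1/2⌋ := Int.le_floor.mpr (by push_cast; linarith)
          rw [round_eq]; omega
        rcases hrd with h' | h' <;> rw [h'] at heq <;> [left; right] <;> simpa using heq
  refine ⟨hbin, ?_, ?_⟩
  · intro t ht τ hτ1 hτ2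
    rcases eq_or_lt_of_le hτ2 with rfl | hlt
    · rcases hbin (τ - 1) with h | h <;> linarith
    · rcases hbin τ with h | h
      · rcases hbin t with h' | h' <;> rcases hbin (τ - 1) with h'' | h'' <;> linarith
      · rcases hbin (τ - 1) with h'' | h''
        · have := (halg t ht).2.1 ⟨τ, hτ1, by omega, by rw [h, h'']; ring⟩
          linarith
        · rcases hbin t with h' | h' <;> linarith
  · intro t ht τ hτ1 hτ2
    rcases eq_or_lt_of_le hτ2 with rfl | hlt
    · rcases hbin (τ - 1) with h | h <;> rcases hbin τ with h' | h' <;> linarith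
    · rcases hbin (τ - 1) with h | h
      · rcases hbin t with h' | h' <;> rcases hbin τ with h'' | h'' <;> linarith
      · rcases hbin τ with h'' | h''
        · have := (halg t ht).2.2.1 ⟨τ, hτ1, by omega, by rw [h, h'']; ring⟩
          linarith
        · rcases hbin t with h' | h' <;> linarith
end
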